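/- arXiv:2508.05493 — 7 statements merged into one kernel-verified Lean document; each statement's English description precedes it below -/
import Mathlib

section
/- Let S and X be n×n real symmetric matrices such that X is positive semidefinite and the largest eigenvalue of X is at most x̄ for some real x̄ ≥ 0. Then the Frobenius inner product ⟨S, X⟩ = tr(S X) is at least x̄ times the sum of the negative eigenvalues of S. -/
/-!
Diagonalise `S = U D Uᴴ` with `D = diag λ`. Then `tr (S X) = ∑ λᵢ Mᵢᵢ` for `M = Uᴴ X U`, and the
diagonal entries of `M` lie in `[0, x̄]`, because `M` and `x̄ • 1 - M = Uᴴ (x̄ • 1 - X) U` are both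
positive semidefinite. Hence each term `λᵢ Mᵢᵢ` is at least `x̄ λᵢ` when `λᵢ < 0` and at least `0`
otherwise.
-/

open Matrix Finset

theorem mul_sum_filter_neg_le_sum_mul {ι R : Type*} [CommRing R] [LinearOrder R]
    [IsStrictOrderedRing R] (s : Finset ι) (l m : ι → R) {c : R}
    (hm₀ : ∀ i ∈ s, 0 ≤ m i) (hmc : ∀ i ∈ s, m i ≤ c) :
    c * ∑ i ∈ s with l i < 0, l i ≤ ∑ i ∈ s, l i * m i := by
  rw [mul_sum, ← sum_filter_add_sum_filter_not s (l · < 0)]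
  refine le_add_of_le_of_nonneg (sum_le_sum fun i hi => ?_) (sum_nonneg fun i hi => ?_)
  · rw [mem_filter] at hi
    rw [mul_comm]
    exact mul_le_mul_of_nonpos_left (hmc i hi.1) hi.2.le
  · rw [mem_filter, not_lt] at hi
    exact mul_nonneg hi.2 (hm₀ i hi.1)

section
open scoped MatrixOrder ComplexOrder

variable {𝕜 ι : Type*} [RCLike 𝕜] [Fintype ι] [DecidableEq ι]

theorem Matrix.IsHermitian.posSemidef_smul_one_sub_of_eigenvalues_le {A : Matrix ι ι 𝕜}
    (hA : A.IsHermitian) {c : ℝ} (hc : ∀ i, hA.eigenvalues i ≤ c) :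
    (c • 1 - A).PosSemidef := by
  have : A ≤ algebraMap ℝ (Matrix ι ι 𝕜) c :=
    (le_algebraMap_iff_spectrum_le hA.isSelfAdjoint).2 fun x hx => by
      obtain ⟨i, rfl⟩ := hA.spectrum_real_eq_range_eigenvalues ▸ hx
      exact hc i
  rwa [Algebra.algebraMap_eq_smul_one] at this

theorem Matrix.IsHermitian.trace_mul_eq_sum_eigenvalues_mul {S : Matrix ι ι 𝕜}
    (hS : S.IsHermitian) (X : Matrix ι ι 𝕜) :
    (S * X).trace = ∑ i, (hS.eigenvalues i : 𝕜) *
      (star (hS.eigenvectorUnitary : Matrix ι ι 𝕜) * X * hS.eigenvectorUnitary) i i := by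
  conv_lhs => rw [hS.spectral_theorem, Unitary.conjStarAlgAut_apply]
  rw [Matrix.mul_assoc, Matrix.mul_assoc, trace_mul_comm, Matrix.mul_assoc]
  simp [trace, diagonal_mul]

theorem Matrix.PosSemidef.diag_conj_unitary_le {X U : Matrix ι ι 𝕜} (hU : U ∈ unitaryGroup ι 𝕜)
    {c : ℝ} (hXc : (c • 1 - X).PosSemidef) (i : ι) : (star U * X * U) i i ≤ c := by
  have hconj : star U * (c • 1 - X) * U = c • 1 - star U * X * U := by
    rw [Matrix.mul_sub, Matrix.sub_mul, Matrix.mul_smul, Matrix.mul_one, Matrix.smul_mul,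
      (mem_unitaryGroup_iff').1 hU]
  have := (hconj ▸ hXc.conjTranspose_mul_mul_same U).diag_nonneg (i := i)
  simpa [sub_nonneg, RCLike.real_smul_eq_coe_mul] using this

end

theorem stmt0_general {n : ℕ} (S X : Matrix (Fin n) (Fin n) ℝ)
    (hS : S.IsHermitian) (hX : X.PosSemidef) (xbar : ℝ)
    (hXeig : ∀ i, hX.1.eigenvalues i ≤ xbar) :
    xbar * ∑ i ∈ Finset.univ.filter (fun i => hS.eigenvalues i < 0), hS.eigenvalues i
      ≤ (S * X).trace := by
  set U := hS.eigenvectorUnitary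
  have hXc := hX.isHermitian.posSemidef_smul_one_sub_of_eigenvalues_le hXeig
  rw [hS.trace_mul_eq_sum_eigenvalues_mul X]
  exact mul_sum_filter_neg_le_sum_mul univ _ _
    (fun i _ => (hX.conjTranspose_mul_mul_same (U : Matrix (Fin n) (Fin n) ℝ)).diag_nonneg)
    (fun i _ => hXc.diag_conj_unitary_le U.2 i)

/-- For real symmetric `S` and PSD `X` with `λ_max(X) ≤ x̄`, `x̄ ≥ 0`,
the Frobenius inner product `⟨S, X⟩ = tr(S X)` is at least `x̄` times the sum of the
negative eigenvalues of `S`. -/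
theorem stmt0 {n : ℕ} (S X : Matrix (Fin n) (Fin n) ℝ)
    (hS : S.IsHermitian) (hX : X.PosSemidef) (xbar : ℝ) (hxbar : 0 ≤ xbar)
    (hXeig : ∀ i, hX.1.eigenvalues i ≤ xbar) :
    xbar * ∑ i ∈ Finset.univ.filter (fun i => hS.eigenvalues i < 0), hS.eigenvalues i
      ≤ (S * X).trace :=
  stmt0_general S X hS hX xbar hXeig
end

section
/- Let Y ∈ R^{n×k} be entrywise nonnegative with Y^T Y = I_k and Y Y^T 1_n = 1_n. Then within each column the nonzero entries are all equal: if Y_{ij} ≠ 0 and Y_{hj} ≠ 0 then Y_{ij} = Y_{hj}. -/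
/-!
Orthogonality of the nonnegative columns of `Y` forces every row to have at most one nonzero
entry. If row `i` is supported in column `j`, the `i`-th entry of `Y Yᵀ 1` is
`Y i j * ∑ h, Y h j`, so `Y Yᵀ 1 = 1` gives `Y i j = (∑ h, Y h j)⁻¹`, which depends on `j` only.
-/

open Matrix

namespace Matrix

variable {m n R : Type*}

theorem eq_of_ne_zero_of_isDiag_transpose_mul_self [Fintype m] [Semiring R] [PartialOrder R]
    [IsOrderedRing R] [NoZeroDivisors R] {Y : Matrix m n R} (hY : ∀ i j, 0 ≤ Y i j)
    (hdiag : (Yᵀ * Y).IsDiag) {i : m} {j l : n} (hj : Y i j ≠ 0) (hl : Y i l ≠ 0) :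
    j = l := by
  by_contra hjl
  have hsum : ∑ h, Y h j * Y h l = 0 := by simpa [mul_apply] using hdiag hjl
  have hterm := (Finset.sum_eq_zero_iff_of_nonneg fun h _ => mul_nonneg (hY h j) (hY h l)).mp
    hsum i (Finset.mem_univ i)
  exact mul_ne_zero hj hl hterm

theorem mulVec_apply_eq_of_row_support [Fintype n] [NonUnitalNonAssocSemiring R]
    {Y : Matrix m n R} {i : m} {j : n} (hrow : ∀ l, l ≠ j → Y i l = 0) (v : n → R) :
    (Y *ᵥ v) i = Y i j * v j :=
  Finset.sum_eq_single j (fun l _ hl => mul_eq_zero_of_left (hrow l hl) _)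
    (fun hj => absurd (Finset.mem_univ j) hj)

end Matrix

/-- If `Y ≥ 0`, `Yᵀ Y = I` and `Y Yᵀ 1 = 1`, then within each column the
nonzero entries are all equal. -/
theorem stmt2 {n k : ℕ} (Y : Matrix (Fin n) (Fin k) ℝ)
    (hnonneg : ∀ i j, 0 ≤ Y i j) (horth : Yᵀ * Y = 1)
    (hones : (Y * Yᵀ) *ᵥ (fun _ => (1 : ℝ)) = fun _ => (1 : ℝ)) :
    ∀ (i h : Fin n) (j : Fin k), Y i j ≠ 0 → Y h j ≠ 0 → Y i j = Y h j := by
  have hdiag : (Yᵀ * Y).IsDiag := horth ▸ isDiag_one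
  have key : ∀ i j, Y i j ≠ 0 → Y i j * ∑ h, Y h j = 1 := by
    intro i j hij
    have hrow : ∀ l, l ≠ j → Y i l = 0 := fun l hl => by
      by_contra hil
      exact hl (eq_of_ne_zero_of_isDiag_transpose_mul_self hnonneg hdiag hil hij)
    have hcol : ∀ l, (Yᵀ *ᵥ fun _ => (1 : ℝ)) l = ∑ h, Y h l := fun l => by
      simp [mulVec, dotProduct]
    rw [← hcol, ← mulVec_apply_eq_of_row_support hrow, mulVec_mulVec, hones]
  intro i h j hij hhj
  have hi := key i j hij
  have hs : ∑ h, Y h j ≠ 0 := right_ne_zero_of_mul_eq_one hi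
  exact mul_right_cancel₀ hs (hi.trans (key h j hhj).symm)
end

section
/- Let Y ∈ R^{n×k} be entrywise nonnegative with Y^T Y = I_k and Y Y^T 1_n = 1_n. Then for each column j there is a nonempty set S_j ⊆ {1,...,n} with Y_{ij} = |S_j|^{-1/2} if i ∈ S_j and Y_{ij} = 0 otherwise, and the sets S_1,...,S_k partition {1,...,n}. -/
/-!
Nonnegativity turns the orthogonality of distinct columns into disjointness of their supports,
so every row of `Y` has at most one nonzero entry. Writing `c = Yᵀ 1` for the column sums, the
condition `Y (Yᵀ 1) = 1` then reads `Y i j * c j = 1` whenever `Y i j ≠ 0`: each row has exactly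
one nonzero entry, and on the support `S j` of column `j` the entries all equal `(c j)⁻¹`.
Summing column `j` gives `c j = #(S j) / c j`, so `c j = √#(S j)`.
-/

open Matrix Finset

namespace Matrix

variable {m n : Type*}

noncomputable def colSupport [Fintype m] (Y : Matrix m n ℝ) (j : n) : Finset m :=
  {i | Y i j ≠ 0}

theorem mem_colSupport [Fintype m] {Y : Matrix m n ℝ} {i : m} {j : n} :
    i ∈ Y.colSupport j ↔ Y i j ≠ 0 := by
  simp [colSupport]

theorem colSupport_nonempty [Fintype m] {Y : Matrix m n ℝ} {j : n} (hj : (Yᵀ * Y) j j ≠ 0) :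
    (Y.colSupport j).Nonempty := by
  by_contra hempty
  have hzero : ∀ i, Y i j = 0 := fun i => by
    simpa [mem_colSupport] using fun hi => hempty ⟨i, hi⟩
  simp [mul_apply, hzero] at hj

theorem eq_of_apply_ne_zero_of_isDiag [Fintype m] {Y : Matrix m n ℝ} (hY : ∀ i j, 0 ≤ Y i j)
    (hdiag : (Yᵀ * Y).IsDiag) {i : m} {j j' : n} (hj : Y i j ≠ 0) (hj' : Y i j' ≠ 0) :
    j = j' := by
  by_contra hne
  have hsum : ∑ i, Y i j * Y i j' = 0 := by simpa [mul_apply] using hdiag hne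
  have := (sum_eq_zero_iff_of_nonneg fun i _ => mul_nonneg (hY i j) (hY i j')).1 hsum i
    (mem_univ i)
  exact mul_ne_zero hj hj' this

theorem mulVec_apply_eq_mul_of_isDiag [Fintype m] [Fintype n] {Y : Matrix m n ℝ}
    (hY : ∀ i j, 0 ≤ Y i j) (hdiag : (Yᵀ * Y).IsDiag) (c : n → ℝ) {i : m} {j : n}
    (hij : Y i j ≠ 0) : (Y *ᵥ c) i = Y i j * c j := by
  refine sum_eq_single j (fun j' _ hj' => ?_) (fun h => absurd (mem_univ j) h)
  have : Y i j' = 0 := by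
    by_contra h
    exact hj' (eq_of_apply_ne_zero_of_isDiag hY hdiag h hij)
  simp [this]

theorem exists_apply_ne_zero_of_mulVec_eq_one [Fintype n] {Y : Matrix m n ℝ} {c : n → ℝ}
    (hrow : Y *ᵥ c = 1) (i : m) : ∃ j, Y i j ≠ 0 := by
  by_contra! h
  simpa [mulVec, dotProduct, h] using congrFun hrow i

variable [Fintype m] [Fintype n] {Y : Matrix m n ℝ}

theorem apply_eq_inv_colSum (hY : ∀ i j, 0 ≤ Y i j) (hdiag : (Yᵀ * Y).IsDiag)
    (hrow : Y *ᵥ (Yᵀ *ᵥ 1) = 1) {i : m} {j : n} (hij : Y i j ≠ 0) :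
    Y i j = ((Yᵀ *ᵥ 1) j)⁻¹ := by
  refine eq_inv_of_mul_eq_one_left ?_
  rw [← mulVec_apply_eq_mul_of_isDiag hY hdiag _ hij, hrow, Pi.one_apply]

theorem colSum_eq_card_mul_inv (hY : ∀ i j, 0 ≤ Y i j) (hdiag : (Yᵀ * Y).IsDiag)
    (hrow : Y *ᵥ (Yᵀ *ᵥ 1) = 1) (j : n) :
    (Yᵀ *ᵥ 1) j = #(Y.colSupport j) * ((Yᵀ *ᵥ 1) j)⁻¹ := calc
  (Yᵀ *ᵥ 1) j = ∑ i ∈ Y.colSupport j, Y i j := by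
    simp [mulVec, dotProduct, colSupport, sum_filter_ne_zero]
  _ = ∑ i ∈ Y.colSupport j, ((Yᵀ *ᵥ 1) j)⁻¹ :=
    sum_congr rfl fun i hi => apply_eq_inv_colSum hY hdiag hrow (mem_colSupport.1 hi)
  _ = #(Y.colSupport j) * ((Yᵀ *ᵥ 1) j)⁻¹ := by rw [sum_const, nsmul_eq_mul]

theorem colSum_sq_eq_card (hY : ∀ i j, 0 ≤ Y i j) (hdiag : (Yᵀ * Y).IsDiag)
    (hrow : Y *ᵥ (Yᵀ *ᵥ 1) = 1) (j : n) : (Yᵀ *ᵥ 1) j ^ 2 = #(Y.colSupport j) := by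
  have hc := colSum_eq_card_mul_inv hY hdiag hrow j
  rcases (Y.colSupport j).eq_empty_or_nonempty with hempty | ⟨i, hi⟩
  · rw [hempty, card_empty, Nat.cast_zero, zero_mul] at hc
    rw [hc, hempty, card_empty, Nat.cast_zero, sq, zero_mul]
  · have hinv := apply_eq_inv_colSum hY hdiag hrow (mem_colSupport.1 hi)
    have hc0 : (Yᵀ *ᵥ 1) j ≠ 0 := fun h0 => mem_colSupport.1 hi (by simp [hinv, h0])
    rw [sq]
    nth_rewrite 1 [hc]
    rw [mul_assoc, inv_mul_cancel₀ hc0, mul_one]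

theorem apply_eq_one_div_sqrt_card (hY : ∀ i j, 0 ≤ Y i j) (hdiag : (Yᵀ * Y).IsDiag)
    (hrow : Y *ᵥ (Yᵀ *ᵥ 1) = 1) {i : m} {j : n} (hij : Y i j ≠ 0) :
    Y i j = 1 / √(#(Y.colSupport j) : ℝ) := by
  have hc : 0 ≤ (Yᵀ *ᵥ 1) j := sum_nonneg fun i _ => by simpa using hY i j
  rw [← colSum_sq_eq_card hY hdiag hrow, Real.sqrt_sq hc, one_div]
  exact apply_eq_inv_colSum hY hdiag hrow hij

end Matrix

/-- If `Y ≥ 0`, `Yᵀ Y = I` and `Y Yᵀ 1 = 1`, then the columns of `Y` are the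
normalized indicator vectors of a partition of `{1,...,n}` into `k` nonempty sets. -/
theorem stmt3 {n k : ℕ} (Y : Matrix (Fin n) (Fin k) ℝ)
    (hnonneg : ∀ i j, 0 ≤ Y i j) (horth : Yᵀ * Y = 1)
    (hones : (Y * Yᵀ) *ᵥ (fun _ => (1 : ℝ)) = fun _ => (1 : ℝ)) :
    ∃ S : Fin k → Finset (Fin n),
      (∀ j, (S j).Nonempty) ∧
      (∀ i : Fin n, ∃! j : Fin k, i ∈ S j) ∧
      (∀ (i : Fin n) (j : Fin k),
        (i ∈ S j → Y i j = 1 / Real.sqrt ((S j).card)) ∧ (i ∉ S j → Y i j = 0)) := by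
  have hdiag : (Yᵀ * Y).IsDiag := horth ▸ isDiag_one
  have hrow : Y *ᵥ (Yᵀ *ᵥ 1) = 1 := by rw [mulVec_mulVec]; exact hones
  refine ⟨Y.colSupport, fun j => colSupport_nonempty (by simp [horth]), fun i => ?_,
    fun i j => ⟨fun hi => apply_eq_one_div_sqrt_card hnonneg hdiag hrow (mem_colSupport.1 hi),
      fun hi => by simpa [mem_colSupport] using hi⟩⟩
  obtain ⟨j, hj⟩ := exists_apply_ne_zero_of_mulVec_eq_one hrow i
  exact ⟨j, mem_colSupport.2 hj, fun j' hj' =>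
    eq_of_apply_ne_zero_of_isDiag hnonneg hdiag (mem_colSupport.1 hj') hj⟩
end

section
/- Let Z be an (n̄+m̄)×(n̄+m̄) symmetric positive semidefinite matrix with nonnegative entries, written in block form Z = [[Z_UU, Z_UV],[Z_UV^T, Z_VV]] with Z_UU ∈ S^{n̄}, Z_VV ∈ S^{m̄}. Suppose Z_UU e_U = 1_{n̄} and Z_VV e_V = 1_{m̄} for entrywise positive integer vectors e_U ∈ R^{n̄}, e_V ∈ R^{m̄} with all entries ≥ 1. Let d_U = min_j (e_U)_j and d_V = min_j (e_V)_j. Then λ_max(Z) ≤ 1/d_U + 1/d_V. -/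
/-!
Write `x = (u, v)` along the blocks. As `Z_UU` is symmetric and nonnegative with row sums at most
`1 / d_U` (from `Z_UU e_U = 1` and `e_U ≥ d_U`), the Schur test gives `u ⬝ Z_UU u ≤ ‖u‖² / d_U`;
likewise `v ⬝ Z_VV v ≤ ‖v‖² / d_V`. Positive semidefiniteness of `Z` at `(d_U u, -d_V v)` gives
`2 u ⬝ Z_UV v ≤ (d_U / d_V) u ⬝ Z_UU u + (d_V / d_U) v ⬝ Z_VV v`, and summing up,
`x ⬝ Z x ≤ (1 / d_U + 1 / d_V) ‖x‖²`.
-/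

open Matrix Finset

namespace Matrix

lemma sum_row_le_of_mulVec_eq_one {ι κ : Type*} [Fintype κ] {A : Matrix ι κ ℝ}
    (hA : ∀ i j, 0 ≤ A i j) {e : κ → ℝ} (he : A *ᵥ e = 1) {d : ℝ} (hd : 0 < d) (hde : ∀ j, d ≤ e j) (i : ι) :
    ∑ j, A i j ≤ 1 / d := by
  rw [le_div_iff₀ hd]
  calc (∑ j, A i j) * d = ∑ j, A i j * d := sum_mul ..
    _ ≤ ∑ j, A i j * e j := by gcongr with j; exacts [hA i j, hde j]
    _ = 1 := congrFun he i

variable {ι κ : Type*} [Fintype ι] [Fintype κ]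

lemma IsSymm.dotProduct_mulVec_le_of_sum_row_le {A : Matrix ι ι ℝ} (hsymm : A.IsSymm)
    (hA : ∀ i j, 0 ≤ A i j) {B : ℝ} (hB : ∀ i, ∑ j, A i j ≤ B) (u : ι → ℝ) :
    u ⬝ᵥ A *ᵥ u ≤ B * (u ⬝ᵥ u) := by
  have hrow : ∑ i, ∑ j, A i j * u i ^ 2 ≤ B * (u ⬝ᵥ u) := by
    simp only [← sum_mul, dotProduct, mul_sum, ← sq]
    exact sum_le_sum fun i _ => mul_le_mul_of_nonneg_right (hB i) (sq_nonneg _)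
  have hcol : ∑ i, ∑ j, A i j * u j ^ 2 = ∑ i, ∑ j, A i j * u i ^ 2 := by
    rw [sum_comm]; simp only [hsymm.apply]
  suffices 2 * (u ⬝ᵥ A *ᵥ u) ≤ 2 * (B * (u ⬝ᵥ u)) by linarith
  calc 2 * (u ⬝ᵥ A *ᵥ u) = ∑ i, ∑ j, 2 * (u i * (A i j * u j)) := by
        simp only [dotProduct, mulVec, mul_sum]
    _ ≤ ∑ i, ∑ j, (A i j * u i ^ 2 + A i j * u j ^ 2) := by
        gcongr with i _ j
        nlinarith [mul_nonneg (hA i j) (sq_nonneg (u i - u j))]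
    _ ≤ 2 * (B * (u ⬝ᵥ u)) := by simp only [sum_add_distrib, hcol]; linarith

lemma dotProduct_fromBlocks_mulVec_sumElim (A : Matrix ι ι ℝ) (B : Matrix ι κ ℝ)
    (D : Matrix κ κ ℝ) (u : ι → ℝ) (v : κ → ℝ) :
    Sum.elim u v ⬝ᵥ fromBlocks A B Bᵀ D *ᵥ Sum.elim u v
      = u ⬝ᵥ A *ᵥ u + 2 * (u ⬝ᵥ B *ᵥ v) + v ⬝ᵥ D *ᵥ v := by
  simp only [fromBlocks_mulVec, sumElim_dotProduct_sumElim, Sum.elim_comp_inl,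
    Sum.elim_comp_inr, dotProduct_add, dotProduct_transpose_mulVec]
  ring

namespace PosSemidef

variable {A : Matrix ι ι ℝ} {B : Matrix ι κ ℝ} {D : Matrix κ κ ℝ}

lemma two_mul_mul_dotProduct_mulVec_le (hZ : (fromBlocks A B Bᵀ D).PosSemidef) (p q : ℝ)
    (u : ι → ℝ) (v : κ → ℝ) :
    2 * p * q * (u ⬝ᵥ B *ᵥ v) ≤ p ^ 2 * (u ⬝ᵥ A *ᵥ u) + q ^ 2 * (v ⬝ᵥ D *ᵥ v) := by
  have h := hZ.dotProduct_mulVec_nonneg (Sum.elim (p • u) (-(q • v)))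
  simp only [star_trivial, dotProduct_fromBlocks_mulVec_sumElim, mulVec_smul, mulVec_neg,
    smul_dotProduct, dotProduct_smul, dotProduct_neg, neg_dotProduct, smul_eq_mul] at h
  linarith

lemma dotProduct_mulVec_le_add (hZ : (fromBlocks A B Bᵀ D).PosSemidef) {α γ : ℝ}
    (hα : 0 < α) (hγ : 0 < γ) (hA : ∀ u, u ⬝ᵥ A *ᵥ u ≤ α * (u ⬝ᵥ u))
    (hD : ∀ v, v ⬝ᵥ D *ᵥ v ≤ γ * (v ⬝ᵥ v)) (x : ι ⊕ κ → ℝ) :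
    x ⬝ᵥ fromBlocks A B Bᵀ D *ᵥ x ≤ (α + γ) * (x ⬝ᵥ x) := by
  rw [← Sum.elim_comp_inl_inr x, dotProduct_fromBlocks_mulVec_sumElim, sumElim_dotProduct_sumElim]
  set u := x ∘ Sum.inl
  set v := x ∘ Sum.inr
  -- The weights `(γ, α)` split the cross term so that both block bounds become `α + γ`.
  have hcross := hZ.two_mul_mul_dotProduct_mulVec_le γ α u v
  have hsum : 0 ≤ α + γ := by positivity
  have key : α * γ * (u ⬝ᵥ A *ᵥ u + 2 * (u ⬝ᵥ B *ᵥ v) + v ⬝ᵥ D *ᵥ v)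
      ≤ α * γ * ((α + γ) * (u ⬝ᵥ u + v ⬝ᵥ v)) := by
    nlinarith [mul_le_mul_of_nonneg_left (hA u) (mul_nonneg hγ.le hsum),
      mul_le_mul_of_nonneg_left (hD v) (mul_nonneg hα.le hsum)]
  exact le_of_mul_le_mul_left key (mul_pos hα hγ)

end PosSemidef

lemma IsHermitian.eigenvalues_le_of_dotProduct_mulVec_le [DecidableEq ι] {A : Matrix ι ι ℝ}
    (hA : A.IsHermitian) {β : ℝ} (h : ∀ x, x ⬝ᵥ A *ᵥ x ≤ β * (x ⬝ᵥ x)) (i : ι) :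
    hA.eigenvalues i ≤ β := by
  have hnorm : ⇑(hA.eigenvectorBasis i) ⬝ᵥ ⇑(hA.eigenvectorBasis i) = 1 := by
    have h := real_inner_self_eq_norm_sq (hA.eigenvectorBasis i)
    rwa [EuclideanSpace.inner_eq_star_dotProduct, star_trivial,
      hA.eigenvectorBasis.orthonormal.1 i, one_pow] at h
  simpa [hA.eigenvalues_eq i, hnorm] using h (hA.eigenvectorBasis i)

end Matrix

/-- For a PSD entrywise-nonnegative block matrix `Z` whose diagonal blocks
satisfy `Z_UU e_U = 1` and `Z_VV e_V = 1` with `e_U, e_V ≥ 1` entrywise, every eigenvalue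
of `Z` is at most `1/d_U + 1/d_V` where `d_U = min_j (e_U)_j`, `d_V = min_j (e_V)_j`. -/
theorem stmt6 {nb mb : ℕ} (hn : 0 < nb) (hm : 0 < mb)
    (ZUU : Matrix (Fin nb) (Fin nb) ℝ) (ZVV : Matrix (Fin mb) (Fin mb) ℝ)
    (ZUV : Matrix (Fin nb) (Fin mb) ℝ)
    (Z : Matrix (Fin nb ⊕ Fin mb) (Fin nb ⊕ Fin mb) ℝ)
    (hZ : Z = Matrix.fromBlocks ZUU ZUV ZUVᵀ ZVV)
    (hpsd : Z.PosSemidef) (hZnonneg : ∀ i j, 0 ≤ Z i j)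
    (eU : Fin nb → ℝ) (eV : Fin mb → ℝ)
    (heU : ∀ j, 1 ≤ eU j) (heV : ∀ j, 1 ≤ eV j)
    (hrowU : ZUU *ᵥ eU = fun _ => (1 : ℝ))
    (hrowV : ZVV *ᵥ eV = fun _ => (1 : ℝ))
    (dU dV : ℝ)
    (hdU : dU = (Finset.univ.image eU).min' (by simp [Finset.univ_nonempty_iff, Fin.pos_iff_nonempty.mp hn]))
    (hdV : dV = (Finset.univ.image eV).min' (by simp [Finset.univ_nonempty_iff, Fin.pos_iff_nonempty.mp hm])) :
    ∀ i, hpsd.1.eigenvalues i ≤ 1 / dU + 1 / dV := by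
  subst hZ
  have hdU_le (j) : dU ≤ eU j := hdU ▸ min'_le _ _ (mem_image_of_mem eU (mem_univ j))
  have hdV_le (j) : dV ≤ eV j := hdV ▸ min'_le _ _ (mem_image_of_mem eV (mem_univ j))
  have hdU_pos : 0 < dU := hdU ▸ one_pos.trans_le (le_min' _ _ _ (by simpa using heU))
  have hdV_pos : 0 < dV := hdV ▸ one_pos.trans_le (le_min' _ _ _ (by simpa using heV))
  have hUU_nonneg (a b) : 0 ≤ ZUU a b := hZnonneg (.inl a) (.inl b)
  have hVV_nonneg (a b) : 0 ≤ ZVV a b := hZnonneg (.inr a) (.inr b)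
  obtain ⟨hUU_herm, -, -, hVV_herm⟩ := isHermitian_fromBlocks_iff.mp hpsd.1
  have hUU (u) : u ⬝ᵥ ZUU *ᵥ u ≤ 1 / dU * (u ⬝ᵥ u) :=
    (isHermitian_iff_isSymm.mp hUU_herm).dotProduct_mulVec_le_of_sum_row_le hUU_nonneg
      (sum_row_le_of_mulVec_eq_one hUU_nonneg hrowU hdU_pos hdU_le) u
  have hVV (v) : v ⬝ᵥ ZVV *ᵥ v ≤ 1 / dV * (v ⬝ᵥ v) :=
    (isHermitian_iff_isSymm.mp hVV_herm).dotProduct_mulVec_le_of_sum_row_le hVV_nonneg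
      (sum_row_le_of_mulVec_eq_one hVV_nonneg hrowV hdV_pos hdV_le) v
  exact hpsd.1.eigenvalues_le_of_dotProduct_mulVec_le
    (hpsd.dotProduct_mulVec_le_add (by positivity) (by positivity) hUU hVV)
end

section
/- Let Y ∈ R^{n×k} be entrywise nonnegative with Y^T Y = I_k and Y Y^T 1_n = 1_n, and set Z = Y Y^T. Then for all distinct indices i, j: Z_{ij} ≤ Z_{ii} (pair inequality), and for all distinct i, j, h: Z_{ij} + Z_{ih} ≤ Z_{ii} + Z_{jh} (triangle inequality). -/
/-
With `Y ≥ 0`, orthogonality of the columns forces every row of `Y` to have at most one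
positive entry, so `Y` is the assignment matrix of a clustering and `Z = Y Yᵀ` is block
diagonal. The row-sum condition `Z 1 = 1` makes all positive entries of a column equal, so
`Z i j` is either `0` or `Z i i`, and `Z j h = Z i i` as soon as `j` and `h` both lie in the
cluster of `i`. Both inequalities follow by distinguishing which entries vanish.
-/

open Finset

namespace Matrix

lemma mul_transpose_self_apply {ι κ R : Type*} [Fintype κ] [NonUnitalNonAssocSemiring R]
    (Y : Matrix ι κ R) (i j : ι) : (Y * Yᵀ) i j = ∑ c, Y i c * Y j c := by
  simp only [mul_apply, transpose_apply]

lemma exists_pos_of_mul_transpose_self_apply_ne_zero {ι κ R : Type*} [Fintype κ]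
    [NonUnitalNonAssocSemiring R] [PartialOrder R] {Y : Matrix ι κ R} (hY : ∀ i c, 0 ≤ Y i c)
    {i j : ι} (hij : (Y * Yᵀ) i j ≠ 0) : ∃ c, 0 < Y i c ∧ 0 < Y j c := by
  rw [mul_transpose_self_apply] at hij
  obtain ⟨c, -, hc⟩ := exists_ne_zero_of_sum_ne_zero hij
  exact ⟨c, (hY i c).lt_of_ne' (left_ne_zero_of_mul hc),
    (hY j c).lt_of_ne' (right_ne_zero_of_mul hc)⟩

variable {ι κ R : Type*} [Field R] [LinearOrder R] [IsStrictOrderedRing R] {Y : Matrix ι κ R}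

lemma mul_transpose_self_apply_nonneg [Fintype κ] (hY : ∀ i c, 0 ≤ Y i c) (i j : ι) :
    0 ≤ (Y * Yᵀ) i j := by
  rw [mul_transpose_self_apply]
  exact sum_nonneg fun c _ => mul_nonneg (hY i c) (hY j c)

lemma apply_eq_zero_of_pos_of_isDiag [Fintype ι] (hY : ∀ i c, 0 ≤ Y i c) (hdiag : (Yᵀ * Y).IsDiag)
    {i : ι} {c c' : κ} (hc : 0 < Y i c) (hne : c' ≠ c) : Y i c' = 0 := by
  have hcol : ∑ r, Y r c * Y r c' = 0 := by
    simpa only [mul_apply, transpose_apply] using hdiag hne.symm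
  have hrow := (sum_eq_zero_iff_of_nonneg fun r _ => mul_nonneg (hY r c) (hY r c')).mp hcol i
    (mem_univ i)
  exact (mul_eq_zero.mp hrow).resolve_left hc.ne'

variable [Fintype ι] [Fintype κ]

lemma mul_transpose_self_apply_of_pos (hY : ∀ i c, 0 ≤ Y i c) (hdiag : (Yᵀ * Y).IsDiag)
    {i : ι} {c : κ} (hc : 0 < Y i c) (j : ι) : (Y * Yᵀ) i j = Y i c * Y j c := by
  rw [mul_transpose_self_apply]
  refine sum_eq_single c (fun c' _ hne => ?_) (fun h => absurd (mem_univ c) h)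
  rw [apply_eq_zero_of_pos_of_isDiag hY hdiag hc hne, zero_mul]

lemma mul_sum_col_eq_one (hY : ∀ i c, 0 ≤ Y i c) (hdiag : (Yᵀ * Y).IsDiag)
    (hrow : (Y * Yᵀ) *ᵥ 1 = 1) {i : ι} {c : κ} (hc : 0 < Y i c) :
    Y i c * ∑ j, Y j c = 1 := by
  have hsum : ∑ j, (Y * Yᵀ) i j = 1 := by
    simpa only [mulVec, dotProduct, Pi.one_apply, mul_one] using congrFun hrow i
  simpa only [mul_sum, mul_transpose_self_apply_of_pos hY hdiag hc] using hsum

lemma apply_eq_of_pos (hY : ∀ i c, 0 ≤ Y i c) (hdiag : (Yᵀ * Y).IsDiag)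
    (hrow : (Y * Yᵀ) *ᵥ 1 = 1) {i j : ι} {c : κ} (hi : 0 < Y i c) (hj : 0 < Y j c) :
    Y i c = Y j c := by
  have hi' := mul_sum_col_eq_one hY hdiag hrow hi
  exact mul_right_cancel₀ (right_ne_zero_of_mul_eq_one hi')
    (hi'.trans (mul_sum_col_eq_one hY hdiag hrow hj).symm)

lemma mul_transpose_self_apply_eq_diag (hY : ∀ i c, 0 ≤ Y i c) (hdiag : (Yᵀ * Y).IsDiag)
    (hrow : (Y * Yᵀ) *ᵥ 1 = 1) {i j : ι} (hij : (Y * Yᵀ) i j ≠ 0) :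
    (Y * Yᵀ) i j = (Y * Yᵀ) i i := by
  obtain ⟨c, hic, hjc⟩ := exists_pos_of_mul_transpose_self_apply_ne_zero hY hij
  rw [mul_transpose_self_apply_of_pos hY hdiag hic, mul_transpose_self_apply_of_pos hY hdiag hic,
    apply_eq_of_pos hY hdiag hrow hic hjc]

lemma mul_transpose_self_apply_eq_diag_of_ne_zero_of_ne_zero (hY : ∀ i c, 0 ≤ Y i c)
    (hdiag : (Yᵀ * Y).IsDiag) (hrow : (Y * Yᵀ) *ᵥ 1 = 1) {i j h : ι}
    (hij : (Y * Yᵀ) i j ≠ 0) (hih : (Y * Yᵀ) i h ≠ 0) : (Y * Yᵀ) j h = (Y * Yᵀ) i i := by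
  obtain ⟨c, hic, hjc⟩ := exists_pos_of_mul_transpose_self_apply_ne_zero hY hij
  have hhc : 0 < Y h c := by
    rw [mul_transpose_self_apply_of_pos hY hdiag hic] at hih
    exact (hY h c).lt_of_ne' (right_ne_zero_of_mul hih)
  rw [mul_transpose_self_apply_of_pos hY hdiag hjc, mul_transpose_self_apply_of_pos hY hdiag hic,
    ← apply_eq_of_pos hY hdiag hrow hic hjc, ← apply_eq_of_pos hY hdiag hrow hic hhc]

lemma mul_transpose_self_apply_le_diag (hY : ∀ i c, 0 ≤ Y i c) (hdiag : (Yᵀ * Y).IsDiag)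
    (hrow : (Y * Yᵀ) *ᵥ 1 = 1) (i j : ι) : (Y * Yᵀ) i j ≤ (Y * Yᵀ) i i := by
  by_cases hij : (Y * Yᵀ) i j = 0
  · exact hij ▸ mul_transpose_self_apply_nonneg hY i i
  · exact (mul_transpose_self_apply_eq_diag hY hdiag hrow hij).le

lemma mul_transpose_self_apply_add_le (hY : ∀ i c, 0 ≤ Y i c) (hdiag : (Yᵀ * Y).IsDiag)
    (hrow : (Y * Yᵀ) *ᵥ 1 = 1) (i j h : ι) :
    (Y * Yᵀ) i j + (Y * Yᵀ) i h ≤ (Y * Yᵀ) i i + (Y * Yᵀ) j h := by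
  have hii := mul_transpose_self_apply_nonneg hY i i
  have hjh := mul_transpose_self_apply_nonneg hY j h
  by_cases hij : (Y * Yᵀ) i j = 0 <;> by_cases hih : (Y * Yᵀ) i h = 0
  · linarith
  · linarith [mul_transpose_self_apply_eq_diag hY hdiag hrow hih]
  · linarith [mul_transpose_self_apply_eq_diag hY hdiag hrow hij]
  · linarith [mul_transpose_self_apply_eq_diag hY hdiag hrow hij,
      mul_transpose_self_apply_eq_diag hY hdiag hrow hih,
      mul_transpose_self_apply_eq_diag_of_ne_zero_of_ne_zero hY hdiag hrow hij hih]

end Matrix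

open Matrix

/-- If `Y ≥ 0`, `Yᵀ Y = I`, `Y Yᵀ 1 = 1` and `Z = Y Yᵀ`, then `Z` satisfies
the pair inequalities `Z_ij ≤ Z_ii` (i ≠ j) and the triangle inequalities
`Z_ij + Z_ih ≤ Z_ii + Z_jh` (i, j, h pairwise distinct). -/
theorem stmt11 {n k : ℕ} (Y : Matrix (Fin n) (Fin k) ℝ)
    (hnonneg : ∀ i j, 0 ≤ Y i j) (horth : Yᵀ * Y = 1)
    (hones : (Y * Yᵀ) *ᵥ (fun _ => (1 : ℝ)) = fun _ => (1 : ℝ))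
    (Z : Matrix (Fin n) (Fin n) ℝ) (hZ : Z = Y * Yᵀ) :
    (∀ i j : Fin n, i ≠ j → Z i j ≤ Z i i) ∧
    (∀ i j h : Fin n, i ≠ j → i ≠ h → j ≠ h → Z i j + Z i h ≤ Z i i + Z j h) := by
  have hdiag : (Yᵀ * Y).IsDiag := horth ▸ isDiag_one
  subst hZ
  exact ⟨fun i j _ => mul_transpose_self_apply_le_diag hnonneg hdiag hones i j,
    fun i j h _ _ _ => mul_transpose_self_apply_add_le hnonneg hdiag hones i j h⟩
end

section
/- Let T ∈ {0,1}^{n̄×n} be a must-link matrix (each column has exactly one 1, rows nonzero), C = T T^T, e = T 1_n. Let Y ∈ R^{n×k} satisfy Y^T Y = I_k, Y Y^T 1_n = 1_n, Y ≥ 0, and suppose Y = T^T C^{-1} T Y (Y is constant on components). Define Ȳ = C^{-1} T Y. Then Ȳ^T Diag(e) Ȳ = I_k, Ȳ Ȳ^T e = 1_{n̄}, and Ȳ ≥ 0. -/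
/-!
Since every column of `T` has exactly one `1`, the Gram matrix `C = T Tᵀ` is `Diag(e)` and
`Tᵀ 1 = 1`; the rows of `T` being nonzero make `C` invertible. Constancy on components,
`Y = Tᵀ C⁻¹ T Y`, together with its transpose `Yᵀ = Yᵀ Tᵀ C⁻¹ T`, then reduces
`Ȳᵀ C Ȳ` to `Yᵀ Y` and `Ȳ Ȳᵀ e = C⁻¹ T Y Yᵀ 1` to `C⁻¹ T 1 = C⁻¹ C 1 = 1`.
Nonnegativity follows from `C Ȳ = T Y` with `C` a positive diagonal matrix.
-/

open Matrix

section ZeroOne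

variable {R m n : Type*} {T : Matrix m n R}

theorem mul_transpose_eq_diagonal_of_zero_one [Fintype n] [NonAssocSemiring R] [DecidableEq m]
    (hbin : ∀ i j, T i j = 0 ∨ T i j = 1) (hcol : ∀ j, ∃! i, T i j = 1) :
    T * Tᵀ = diagonal (T *ᵥ 1) := by
  ext i i'
  simp only [mul_apply, transpose_apply, diagonal_apply, mulVec, dotProduct, Pi.one_apply,
    mul_one]
  split_ifs with h
  · subst h
    refine Finset.sum_congr rfl fun j _ => ?_
    rcases hbin i j with h | h <;> simp [h]
  · refine Finset.sum_eq_zero fun j _ => ?_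
    rcases hbin i j with hi | hi
    · simp [hi]
    rcases hbin i' j with hi' | hi'
    · simp [hi']
    · exact absurd ((hcol j).unique hi hi') h

theorem transpose_mulVec_one_of_zero_one [Fintype m] [NonAssocSemiring R]
    (hbin : ∀ i j, T i j = 0 ∨ T i j = 1) (hcol : ∀ j, ∃! i, T i j = 1) :
    Tᵀ *ᵥ 1 = 1 := by
  funext j
  obtain ⟨i, hi, huniq⟩ := hcol j
  simp only [mulVec, dotProduct, transpose_apply, Pi.one_apply, mul_one]
  rw [Finset.sum_eq_single i (fun i' _ hne => (hbin i' j).resolve_right (hne ∘ huniq i'))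
    (by simp), hi]

theorem mulVec_one_pos_of_zero_one [Fintype n] [Semiring R] [PartialOrder R]
    [IsStrictOrderedRing R] (hbin : ∀ i j, T i j = 0 ∨ T i j = 1) (hrow : ∀ i, ∃ j, T i j = 1)
    (i : m) : 0 < (T *ᵥ 1) i := by
  obtain ⟨j, hj⟩ := hrow i
  have hnonneg : ∀ j, 0 ≤ T i j := fun j => by rcases hbin i j with h | h <;> simp [h]
  calc (0 : R) < T i j := by simp [hj]
    _ ≤ (T *ᵥ 1) i := by
      simpa [mulVec, dotProduct] using
        Finset.single_le_sum (fun j _ => hnonneg j) (Finset.mem_univ j)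

end ZeroOne

section Nonneg

variable {R l m n : Type*} [Fintype m] [Semiring R] [PartialOrder R] [IsOrderedRing R]

theorem mul_apply_nonneg {A : Matrix l m R} {B : Matrix m n R} (hA : ∀ i j, 0 ≤ A i j)
    (hB : ∀ i j, 0 ≤ B i j) (i : l) (j : n) : 0 ≤ (A * B) i j :=
  Finset.sum_nonneg fun k _ => mul_nonneg (hA i k) (hB k j)

end Nonneg

theorem nonneg_of_diagonal_mul_nonneg {K m n : Type*} [Fintype m] [DecidableEq m] [Field K]
    [LinearOrder K] [IsStrictOrderedRing K] {d : m → K} (hd : ∀ i, 0 < d i) {A : Matrix m n K}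
    (h : ∀ i j, 0 ≤ (diagonal d * A) i j) (i : m) (j : n) : 0 ≤ A i j := by
  have hij := h i j
  rw [diagonal_mul] at hij
  exact nonneg_of_mul_nonneg_right hij (hd i)

section Aggregation

variable {R m n k : Type*} [CommRing R] [Fintype m] [DecidableEq m] [Fintype n]
  {T : Matrix m n R} {Y : Matrix n k R}

theorem transpose_mul_transpose_mul_inv_mul_of_eq (hconst : Y = Tᵀ * (T * Tᵀ)⁻¹ * T * Y) :
    Yᵀ * Tᵀ * (T * Tᵀ)⁻¹ * T = Yᵀ := by
  conv_rhs => rw [hconst]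
  simp only [transpose_mul, transpose_transpose, transpose_nonsing_inv, Matrix.mul_assoc]

theorem aggregate_transpose_mul_mul_aggregate (hdet : IsUnit (T * Tᵀ).det)
    (hconst : Y = Tᵀ * (T * Tᵀ)⁻¹ * T * Y) :
    ((T * Tᵀ)⁻¹ * T * Y)ᵀ * (T * Tᵀ) * ((T * Tᵀ)⁻¹ * T * Y) = Yᵀ * Y := by
  calc ((T * Tᵀ)⁻¹ * T * Y)ᵀ * (T * Tᵀ) * ((T * Tᵀ)⁻¹ * T * Y)
      = Yᵀ * Tᵀ * (T * Tᵀ)⁻¹ * ((T * Tᵀ) * ((T * Tᵀ)⁻¹ * (T * Y))) := by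
        simp only [transpose_mul, transpose_transpose, transpose_nonsing_inv, Matrix.mul_assoc]
    _ = (Yᵀ * Tᵀ * (T * Tᵀ)⁻¹ * T) * Y := by
        rw [mul_nonsing_inv_cancel_left _ _ hdet]
        simp only [Matrix.mul_assoc]
    _ = Yᵀ * Y := by rw [transpose_mul_transpose_mul_inv_mul_of_eq hconst]

theorem aggregate_mul_aggregate_transpose_mulVec [Fintype k] (hdet : IsUnit (T * Tᵀ).det)
    (hconst : Y = Tᵀ * (T * Tᵀ)⁻¹ * T * Y) (hcol : Tᵀ *ᵥ 1 = 1)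
    (hones : (Y * Yᵀ) *ᵥ 1 = 1) :
    (((T * Tᵀ)⁻¹ * T * Y) * ((T * Tᵀ)⁻¹ * T * Y)ᵀ) *ᵥ (T *ᵥ 1) = 1 := by
  have hgram : (T * Tᵀ) *ᵥ 1 = T *ᵥ 1 := by rw [← mulVec_mulVec, hcol]
  calc (((T * Tᵀ)⁻¹ * T * Y) * ((T * Tᵀ)⁻¹ * T * Y)ᵀ) *ᵥ (T *ᵥ 1)
      = ((T * Tᵀ)⁻¹ * T * Y * (Yᵀ * Tᵀ * (T * Tᵀ)⁻¹ * T)) *ᵥ 1 := by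
        simp only [mulVec_mulVec, transpose_mul, transpose_transpose, transpose_nonsing_inv,
          Matrix.mul_assoc]
    _ = (T * Tᵀ)⁻¹ *ᵥ (T *ᵥ ((Y * Yᵀ) *ᵥ 1)) := by
        rw [transpose_mul_transpose_mul_inv_mul_of_eq hconst]
        simp only [mulVec_mulVec, Matrix.mul_assoc]
    _ = 1 := by rw [hones, ← hgram, mulVec_mulVec, nonsing_inv_mul _ hdet, one_mulVec]

end Aggregation

/-- Conversely, from a feasible solution `Y` of the original problem that is
constant on components, `Ȳ = C⁻¹ T Y` is feasible for the aggregated problem. -/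
theorem stmt15 {nb n k : ℕ} (T : Matrix (Fin nb) (Fin n) ℝ)
    (hbin : ∀ i j, T i j = 0 ∨ T i j = 1)
    (hcol : ∀ j : Fin n, ∃! i : Fin nb, T i j = 1)
    (hrow : ∀ i : Fin nb, ∃ j : Fin n, T i j = 1)
    (C : Matrix (Fin nb) (Fin nb) ℝ) (hC : C = T * Tᵀ)
    (e : Fin nb → ℝ) (he : e = T *ᵥ (fun _ => (1 : ℝ)))
    (Y : Matrix (Fin n) (Fin k) ℝ)
    (horth : Yᵀ * Y = 1)
    (hones : (Y * Yᵀ) *ᵥ (fun _ => (1 : ℝ)) = fun _ => (1 : ℝ))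
    (hnonneg : ∀ i j, 0 ≤ Y i j)
    (hconst : Y = Tᵀ * C⁻¹ * T * Y)
    (Ybar : Matrix (Fin nb) (Fin k) ℝ) (hYbar : Ybar = C⁻¹ * T * Y) :
    Ybarᵀ * Matrix.diagonal e * Ybar = 1 ∧
    (Ybar * Ybarᵀ) *ᵥ e = (fun _ => (1 : ℝ)) ∧
    ∀ i j, 0 ≤ Ybar i j := by
  subst hC he hYbar
  have hgram : T * Tᵀ = diagonal (T *ᵥ fun _ => 1) := mul_transpose_eq_diagonal_of_zero_one hbin hcol
  have hpos : ∀ i, 0 < (T *ᵥ fun _ => 1) i := mulVec_one_pos_of_zero_one hbin hrow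
  have hdet : IsUnit (T * Tᵀ).det := by
    rw [hgram, det_diagonal, isUnit_iff_ne_zero]
    exact Finset.prod_ne_zero_iff.mpr fun i _ => (hpos i).ne'
  have hTnonneg : ∀ i j, 0 ≤ T i j := fun i j => by rcases hbin i j with h | h <;> simp [h]
  refine ⟨?_, aggregate_mul_aggregate_transpose_mulVec hdet hconst
    (transpose_mulVec_one_of_zero_one hbin hcol) hones, ?_⟩
  · rw [← hgram, aggregate_transpose_mul_mul_aggregate hdet hconst, horth]
  · refine nonneg_of_diagonal_mul_nonneg hpos fun i j => ?_
    rw [← hgram, Matrix.mul_assoc _ T Y, mul_nonsing_inv_cancel_left _ _ hdet]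
    exact mul_apply_nonneg hTnonneg hnonneg i j
end

section
/- Let Y ∈ R^{n×k} be entrywise nonnegative with Y^T Y = I_k and Y Y^T 1_n = 1_n, and set Z = Y Y^T. Then for every pair i, j: Z_{ij} · (Z_{ii} − Z_{ij}) = 0; that is, either Z_{ij} = 0 or Z_{ij} = Z_{ii}. -/
/-!
Orthogonality of the nonnegative columns of `Y` forces their supports to be disjoint, so every
row of `Y` has at most one nonzero entry. If `Z i j ≠ 0`, rows `i` and `j` are both supported on
one column `c`, and the row-sum condition reads `Y i c * s = 1 = Y j c * s` with `s` the sum of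
column `c`; hence `Y i c = Y j c` and `Z i j = Y i c * Y j c = Z i i`.
-/

open Matrix

namespace Matrix

variable {m ι R : Type*}

theorem apply_eq_zero_of_isDiag_transpose_mul_self [Fintype m] [Semiring R] [PartialOrder R]
    [IsOrderedRing R] [NoZeroDivisors R] {Y : Matrix m ι R} (hY : ∀ i c, 0 ≤ Y i c)
    (hdiag : (Yᵀ * Y).IsDiag) {i : m} {c d : ι} (hc : Y i c ≠ 0) (hdc : d ≠ c) :
    Y i d = 0 := by
  have hsum : ∑ l, Y l d * Y l c = 0 := by simpa [mul_apply] using hdiag hdc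
  have hprod := (Finset.sum_eq_zero_iff_of_nonneg fun l _ => mul_nonneg (hY l d) (hY l c)).mp
    hsum i (Finset.mem_univ i)
  exact (mul_eq_zero.mp hprod).resolve_right hc

theorem mul_transpose_apply_of_row_support [Fintype ι] [NonUnitalNonAssocSemiring R]
    {Y : Matrix m ι R} {i : m} {c : ι} (hi : ∀ d, d ≠ c → Y i d = 0) (j : m) :
    (Y * Yᵀ) i j = Y i c * Y j c := by
  rw [mul_apply]
  exact Fintype.sum_eq_single c fun d hd => by rw [transpose_apply, hi d hd, zero_mul]

theorem mul_transpose_mulVec_one_apply_of_row_support [Fintype m] [Fintype ι]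
    [NonAssocSemiring R] {Y : Matrix m ι R} {i : m} {c : ι} (hi : ∀ d, d ≠ c → Y i d = 0) :
    ((Y * Yᵀ) *ᵥ fun _ => 1) i = Y i c * ∑ l, Y l c := by
  simp only [mulVec, dotProduct, mul_one, mul_transpose_apply_of_row_support hi, Finset.mul_sum]

theorem mul_transpose_apply_eq_diag_of_ne_zero [Fintype m] [Fintype ι] [Ring R] [PartialOrder R]
    [IsOrderedRing R] [NoZeroDivisors R] [Nontrivial R] {Y : Matrix m ι R}
    (hY : ∀ i c, 0 ≤ Y i c) (hdiag : (Yᵀ * Y).IsDiag)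
    (hones : (Y * Yᵀ) *ᵥ (fun _ => (1 : R)) = fun _ => 1) {i j : m}
    (hij : (Y * Yᵀ) i j ≠ 0) : (Y * Yᵀ) i j = (Y * Yᵀ) i i := by
  obtain ⟨c, -, hc⟩ := Finset.exists_ne_zero_of_sum_ne_zero (by simpa [mul_apply] using hij)
  have hi : ∀ d, d ≠ c → Y i d = 0 := fun _ =>
    apply_eq_zero_of_isDiag_transpose_mul_self hY hdiag (left_ne_zero_of_mul hc)
  have hj : ∀ d, d ≠ c → Y j d = 0 := fun _ =>
    apply_eq_zero_of_isDiag_transpose_mul_self hY hdiag (right_ne_zero_of_mul hc)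
  have hsum_i := (mul_transpose_mulVec_one_apply_of_row_support hi).symm.trans (congrFun hones i)
  have hsum_j := (mul_transpose_mulVec_one_apply_of_row_support hj).symm.trans (congrFun hones j)
  have hcol : Y i c = Y j c :=
    mul_right_cancel₀ (right_ne_zero_of_mul_eq_one hsum_i) (hsum_i.trans hsum_j.symm)
  rw [mul_transpose_apply_of_row_support hi, mul_transpose_apply_of_row_support hi, hcol]

end Matrix

/-- If `Y ≥ 0`, `Yᵀ Y = I`, `Y Yᵀ 1 = 1` and `Z = Y Yᵀ`, then for all `i, j`:
`Z_ij (Z_ii − Z_ij) = 0`. -/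
theorem stmt17 {n k : ℕ} (Y : Matrix (Fin n) (Fin k) ℝ)
    (hnonneg : ∀ i j, 0 ≤ Y i j) (horth : Yᵀ * Y = 1)
    (hones : (Y * Yᵀ) *ᵥ (fun _ => (1 : ℝ)) = fun _ => (1 : ℝ))
    (Z : Matrix (Fin n) (Fin n) ℝ) (hZ : Z = Y * Yᵀ) :
    ∀ i j : Fin n, Z i j * (Z i i - Z i j) = 0 := by
  subst hZ
  intro i j
  by_cases hij : (Y * Yᵀ) i j = 0
  · rw [hij, zero_mul]
  · rw [mul_transpose_apply_eq_diag_of_ne_zero hnonneg (horth ▸ isDiag_one) hones hij, sub_self,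
      mul_zero]
end
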